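/- arXiv:2412.07957 — 2 statements merged into one kernel-verified Lean document; each statement's English description precedes it below -/
import Mathlib

section
/- Under the setting of the previous statement with Σ_k min(aki, akj)^α > 0, the limiting tail dependence coefficient of (Ri, Rj) equals χ = lim_{x→∞} P(Rj > x | Ri > x) = (Σ_k min(aki, akj)^α) / (Σ_k aki^α) > 0, so Ri and Rj are asymptotically dependent. -/
open MeasureTheory Filter ProbabilityTheory Topology

/-!
One big jump: a nonnegative combination of independent power-tailed factors exceeds a large
level `x` essentially only when a single factor does, since the event that two factors both
exceed a fixed fraction of `x` has probability `O(x^(-2α))`. Hence `{Rᵢ > x, Rⱼ > x}` is, up to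
negligible events, the union of the events `{min(aₖᵢ, aₖⱼ) Sₖ > x}`, whose probabilities add up
(Bonferroni) to `2C (Σₖ min(aₖᵢ, aₖⱼ)^α) x^(-α)`; dividing by the marginal tail gives `χ`.
For the upper bound, either all factors but one contribute at most `η x` each, so the remaining
one exceeds `(1 - K η) x`, or two factors exceed `η x`; then let `η → 0`.
-/

def HasPowerTail {Ω : Type*} [MeasurableSpace Ω] (μ : Measure Ω) (S : Ω → ℝ) (α L : ℝ) :
    Prop :=
  Tendsto (fun x : ℝ => x ^ α * μ.real {ω | x < S ω}) atTop (𝓝 L)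

namespace HasPowerTail

variable {Ω : Type*} [MeasurableSpace Ω] {μ : Measure Ω} {S T : Ω → ℝ} {α L L' : ℝ}

theorem const_mul (h : HasPowerTail μ S α L) (hα : 0 < α) {c : ℝ} (hc : 0 ≤ c) :
    HasPowerTail μ (fun ω => c * S ω) α (L * c ^ α) := by
  rcases hc.eq_or_lt with rfl | hc
  · rw [Real.zero_rpow hα.ne', mul_zero]
    refine tendsto_const_nhds.congr' ?_
    filter_upwards [eventually_gt_atTop 0] with x hx
    simp [not_lt_of_gt hx]
  · have hlim := (h.comp (tendsto_id.atTop_div_const hc)).mul_const (c ^ α)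
    refine hlim.congr' ?_
    filter_upwards [eventually_gt_atTop 0] with x hx
    have hset : {ω | x / c < S ω} = {ω | x < c * S ω} := Set.ext fun ω => div_lt_iff₀' hc
    simp only [Function.comp_apply, id, hset, Real.div_rpow hx.le hc.le]
    field_simp

theorem tendsto_measureReal (h : HasPowerTail μ S α L) (hα : 0 < α) :
    Tendsto (fun x : ℝ => μ.real {ω | x < S ω}) atTop (𝓝 0) := by
  have hlim := (tendsto_rpow_neg_atTop hα).mul h
  rw [zero_mul] at hlim
  refine hlim.congr' ?_
  filter_upwards [eventually_gt_atTop 0] with x hx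
  rw [Real.rpow_neg hx.le, inv_mul_cancel_left₀ (Real.rpow_pos_of_pos hx α).ne']

theorem inter [IsFiniteMeasure μ] (hS : HasPowerTail μ S α L) (hT : HasPowerTail μ T α L')
    (hST : IndepFun S T μ) (hα : 0 < α) :
    Tendsto (fun x : ℝ => x ^ α * μ.real ({ω | x < S ω} ∩ {ω | x < T ω})) atTop (𝓝 0) := by
  have hlim := hS.mul (hT.tendsto_measureReal hα)
  rw [mul_zero] at hlim
  refine hlim.congr fun x => ?_
  have hprod : μ.real (S ⁻¹' Set.Ioi x ∩ T ⁻¹' Set.Ioi x) =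
      μ.real (S ⁻¹' Set.Ioi x) * μ.real (T ⁻¹' Set.Ioi x) := by
    simp only [measureReal_def,
      hST.measure_inter_preimage_eq_mul _ _ measurableSet_Ioi measurableSet_Ioi,
      ENNReal.toReal_mul]
  exact (mul_assoc _ _ _).trans (congrArg _ hprod.symm)

end HasPowerTail

theorem sum_measureReal_le_measureReal_biUnion_add {Ω ι : Type*} [MeasurableSpace Ω]
    {μ : Measure Ω} [IsFiniteMeasure μ] [DecidableEq ι] {A : ι → Set Ω}
    (hA : ∀ k, MeasurableSet (A k)) (s : Finset ι) :
    ∑ k ∈ s, μ.real (A k) ≤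
      μ.real (⋃ k ∈ s, A k) + ∑ k ∈ s, ∑ l ∈ s.erase k, μ.real (A k ∩ A l) := by
  set D : ι → Set Ω := fun k => A k \ ⋃ l ∈ s.erase k, A l
  have hD_le : ∀ k, μ.real (A k) ≤ μ.real (D k) + ∑ l ∈ s.erase k, μ.real (A k ∩ A l) := by
    intro k
    have hsub : A k ⊆ D k ∪ ⋃ l ∈ s.erase k, A k ∩ A l := by
      intro ω hω
      by_cases h : ω ∈ ⋃ l ∈ s.erase k, A l
      · right
        obtain ⟨l, hl, hωl⟩ := Set.mem_iUnion₂.mp h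
        exact Set.mem_iUnion₂.mpr ⟨l, hl, hω, hωl⟩
      · exact Or.inl ⟨hω, h⟩
    calc μ.real (A k) ≤ μ.real (D k ∪ ⋃ l ∈ s.erase k, A k ∩ A l) := measureReal_mono hsub
      _ ≤ μ.real (D k) + μ.real (⋃ l ∈ s.erase k, A k ∩ A l) := measureReal_union_le _ _
      _ ≤ μ.real (D k) + ∑ l ∈ s.erase k, μ.real (A k ∩ A l) := by
        gcongr; exact measureReal_biUnion_finset_le _ _
  have hdisj : (s : Set ι).PairwiseDisjoint D := by
    intro k hk l hl hkl
    refine Set.disjoint_left.mpr fun ω hωk hωl => hωl.2 ?_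
    exact Set.mem_iUnion₂.mpr ⟨k, Finset.mem_erase.mpr ⟨hkl, hk⟩, hωk.1⟩
  have hD_meas : ∀ k ∈ s, MeasurableSet (D k) := fun k _ =>
    (hA k).diff (Finset.measurableSet_biUnion _ fun l _ => hA l)
  calc ∑ k ∈ s, μ.real (A k)
      ≤ ∑ k ∈ s, (μ.real (D k) + ∑ l ∈ s.erase k, μ.real (A k ∩ A l)) :=
        Finset.sum_le_sum fun k _ => hD_le k
    _ = μ.real (⋃ k ∈ s, D k) + ∑ k ∈ s, ∑ l ∈ s.erase k, μ.real (A k ∩ A l) := by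
        rw [Finset.sum_add_distrib, measureReal_biUnion_finset hdisj hD_meas]
    _ ≤ μ.real (⋃ k ∈ s, A k) + ∑ k ∈ s, ∑ l ∈ s.erase k, μ.real (A k ∩ A l) := by
        gcongr ?_ + _
        exact measureReal_mono (Set.biUnion_mono subset_rfl fun k _ => Set.sdiff_subset)
          (measure_ne_top μ _)

theorem exists_forall_ne_le_or_exists_ne_lt {ι : Type*} [Nonempty ι] (f : ι → ℝ) (δ : ℝ) :
    (∃ k₀, ∀ k ≠ k₀, f k ≤ δ) ∨ ∃ k l, k ≠ l ∧ δ < f k ∧ δ < f l := by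
  by_cases hbig : ∃ k₀, δ < f k₀
  · obtain ⟨k₀, hk₀⟩ := hbig
    by_cases hsecond : ∃ k ≠ k₀, δ < f k
    · obtain ⟨k, hk, hδk⟩ := hsecond
      exact Or.inr ⟨k, k₀, hk, hδk, hk₀⟩
    · push Not at hsecond
      exact Or.inl ⟨k₀, hsecond⟩
  · push Not at hbig
    exact Or.inl ⟨Classical.arbitrary ι, fun k _ => hbig k⟩

theorem sub_card_mul_lt_of_lt_sum {ι : Type*} [Fintype ι] {f : ι → ℝ} {x δ : ℝ} {k₀ : ι}
    (hx : x < ∑ k, f k) (hf : ∀ k ≠ k₀, f k ≤ δ) (hδ : 0 ≤ δ) :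
    x - Fintype.card ι * δ < f k₀ := by
  classical
  have hrest : ∑ k ∈ Finset.univ.erase k₀, f k ≤ Fintype.card ι * δ :=
    calc ∑ k ∈ Finset.univ.erase k₀, f k ≤ (Finset.univ.erase k₀).card • δ :=
          Finset.sum_le_card_nsmul _ _ _ fun k hk => hf k (Finset.ne_of_mem_erase hk)
      _ ≤ Fintype.card ι * δ := by
          rw [nsmul_eq_mul]
          gcongr
          exact_mod_cast (Finset.card_erase_le).trans (Finset.card_univ).le
  rw [← Finset.sum_erase_add _ _ (Finset.mem_univ k₀)] at hx
  linarith

theorem exists_lt_min_mul_or_exists_ne_lt_max_mul {ι : Type*} [Fintype ι] {a b s : ι → ℝ}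
    (hs : ∀ k, 0 ≤ s k) {x δ : ℝ} (hx : 0 ≤ x)
    (hδ : 0 ≤ δ) (hxa : x < ∑ k, a k * s k) (hxb : x < ∑ k, b k * s k) :
    (∃ k, x - Fintype.card ι * δ < min (a k) (b k) * s k) ∨
      ∃ k l, k ≠ l ∧ δ < max (a k) (b k) * s k ∧ δ < max (a l) (b l) * s l := by
  have : Nonempty ι := by
    by_contra hempty
    rw [not_nonempty_iff] at hempty
    simp only [Finset.univ_eq_empty, Finset.sum_empty] at hxa
    linarith
  refine (exists_forall_ne_le_or_exists_ne_lt (fun k => max (a k) (b k) * s k) δ).imp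
    (fun ⟨k₀, hk₀⟩ => ⟨k₀, ?_⟩) id
  have hle : ∀ c : ι → ℝ, (∀ k, c k ≤ max (a k) (b k)) → ∀ k ≠ k₀, c k * s k ≤ δ :=
    fun c hc k hk => (mul_le_mul_of_nonneg_right (hc k) (hs k)).trans (hk₀ k hk)
  rw [min_mul_of_nonneg _ _ (hs k₀)]
  exact lt_min (sub_card_mul_lt_of_lt_sum hxa (hle a fun k => le_max_left _ _) hδ)
    (sub_card_mul_lt_of_lt_sum hxb (hle b fun k => le_max_right _ _) hδ)

theorem tendsto_of_tendsto_of_le_of_eventually_le_family {α β : Type*} {l : Filter α}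
    {l' : Filter β} [l'.NeBot] {f g : α → ℝ} {u : β → α → ℝ} {U : β → ℝ} {a : ℝ}
    (hg : Tendsto g l (𝓝 a)) (hgf : g ≤ᶠ[l] f) (hfu : ∀ᶠ η in l', f ≤ᶠ[l] u η)
    (hu : ∀ᶠ η in l', Tendsto (u η) l (𝓝 (U η))) (hU : Tendsto U l' (𝓝 a)) :
    Tendsto f l (𝓝 a) := by
  refine tendsto_order.2 ⟨fun b hb => ?_, fun b hb => ?_⟩
  · filter_upwards [hg.eventually (eventually_gt_nhds hb), hgf] with x hbx hx
    exact hbx.trans_le hx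
  · obtain ⟨η, hUη, hfuη, huη⟩ :=
      ((hU.eventually (eventually_lt_nhds hb)).and (hfu.and hu)).exists
    filter_upwards [huη.eventually (eventually_lt_nhds hUη), hfuη] with x hux hx
    exact hx.trans_lt hux

section JointTail

variable {Ω ι : Type*} [MeasurableSpace Ω] {μ : Measure Ω} [Fintype ι] {S : ι → Ω → ℝ} {α L : ℝ}
  {a b : ι → ℝ}

theorem tendsto_sum_rpow_mul_measureReal_lt (hS : ∀ k, HasPowerTail μ (S k) α L) (hα : 0 < α)
    {c : ι → ℝ} (hc : ∀ k, 0 ≤ c k) :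
    Tendsto (fun x : ℝ => ∑ k, x ^ α * μ.real {ω | x < c k * S k ω}) atTop
      (𝓝 (∑ k, L * c k ^ α)) :=
  tendsto_finsetSum _ fun k _ => (hS k).const_mul hα (hc k)

theorem tendsto_sum_rpow_mul_measureReal_pair [IsFiniteMeasure μ] [DecidableEq ι]
    (hS : ∀ k, HasPowerTail μ (S k) α L) (hind : iIndepFun S μ) (hα : 0 < α) {c : ι → ℝ}
    (hc : ∀ k, 0 ≤ c k) :
    Tendsto (fun x : ℝ => ∑ k, ∑ l ∈ Finset.univ.erase k,
      x ^ α * μ.real ({ω | x < c k * S k ω} ∩ {ω | x < c l * S l ω})) atTop (𝓝 0) := by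
  have hlim := tendsto_finsetSum Finset.univ fun k _ =>
    tendsto_finsetSum (Finset.univ.erase k) fun l hl =>
      ((hS k).const_mul hα (hc k)).inter ((hS l).const_mul hα (hc l))
        ((hind.indepFun (Finset.ne_of_mem_erase hl).symm).comp
          (measurable_const_mul (c k)) (measurable_const_mul (c l))) hα
  simpa using hlim

theorem sum_measureReal_sub_le_measureReal_joint [IsFiniteMeasure μ] [DecidableEq ι]
    (hnn : ∀ k ω, 0 ≤ S k ω) (hmeas : ∀ k, Measurable (S k))
    (ha : ∀ k, 0 ≤ a k) (hb : ∀ k, 0 ≤ b k) (x : ℝ) :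
    ∑ k, μ.real {ω | x < min (a k) (b k) * S k ω} -
        ∑ k, ∑ l ∈ Finset.univ.erase k, μ.real ({ω | x < min (a k) (b k) * S k ω} ∩
          {ω | x < min (a l) (b l) * S l ω}) ≤
      μ.real {ω | x < ∑ k, a k * S k ω ∧ x < ∑ k, b k * S k ω} := by
  have hterm : ∀ (c : ι → ℝ), (∀ k, 0 ≤ c k) → (∀ k, min (a k) (b k) ≤ c k) → ∀ k ω,
      min (a k) (b k) * S k ω ≤ ∑ l, c l * S l ω := fun c hc hmc k ω =>
    (mul_le_mul_of_nonneg_right (hmc k) (hnn k ω)).trans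
      (Finset.single_le_sum (fun l _ => mul_nonneg (hc l) (hnn l ω)) (Finset.mem_univ k))
  have hsub : (⋃ k ∈ Finset.univ, {ω | x < min (a k) (b k) * S k ω}) ⊆
      {ω | x < ∑ k, a k * S k ω ∧ x < ∑ k, b k * S k ω} := by
    intro ω hω
    obtain ⟨k, -, hk⟩ := Set.mem_iUnion₂.mp hω
    exact ⟨hk.trans_le (hterm a ha (fun k => min_le_left _ _) k ω),
      hk.trans_le (hterm b hb (fun k => min_le_right _ _) k ω)⟩
  rw [sub_le_iff_le_add]
  refine (sum_measureReal_le_measureReal_biUnion_add (fun k => ?_) _).trans ?_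
  · exact measurableSet_lt measurable_const ((hmeas k).const_mul _)
  · gcongr ?_ + _
    exact measureReal_mono hsub

-- The event `{t x < c S}` is written `{x < c / t * S}`, the form `HasPowerTail` speaks about.
theorem measureReal_joint_le_sum_add [IsFiniteMeasure μ] [DecidableEq ι]
    (hnn : ∀ k ω, 0 ≤ S k ω) {x η : ℝ} (hx : 0 ≤ x) (hη : 0 < η)
    (hKη : 0 < 1 - Fintype.card ι * η) :
    μ.real {ω | x < ∑ k, a k * S k ω ∧ x < ∑ k, b k * S k ω} ≤
      ∑ k, μ.real {ω | x < min (a k) (b k) / (1 - Fintype.card ι * η) * S k ω} +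
        ∑ k, ∑ l ∈ Finset.univ.erase k,
          μ.real ({ω | x < max (a k) (b k) / η * S k ω} ∩
            {ω | x < max (a l) (b l) / η * S l ω}) := by
  have hlt : ∀ {t c s : ℝ}, 0 < t → t * x < c * s → x < c / t * s := fun ht h => by
    rwa [div_mul_eq_mul_div, lt_div_iff₀ ht, mul_comm]
  have hsub : {ω | x < ∑ k, a k * S k ω ∧ x < ∑ k, b k * S k ω} ⊆
      (⋃ k ∈ Finset.univ, {ω | x < min (a k) (b k) / (1 - Fintype.card ι * η) * S k ω}) ∪
        ⋃ k ∈ Finset.univ, ⋃ l ∈ Finset.univ.erase k,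
          {ω | x < max (a k) (b k) / η * S k ω} ∩ {ω | x < max (a l) (b l) / η * S l ω} := by
    rintro ω ⟨hxa, hxb⟩
    rcases exists_lt_min_mul_or_exists_ne_lt_max_mul (fun k => hnn k ω) hx
      (mul_nonneg hη.le hx) hxa hxb with ⟨k, hk⟩ | ⟨k, l, hkl, hk, hl⟩
    · refine Or.inl (Set.mem_iUnion₂.mpr ⟨k, Finset.mem_univ k, hlt hKη ?_⟩)
      linarith
    · exact Or.inr (Set.mem_iUnion₂.mpr ⟨k, Finset.mem_univ k,
        Set.mem_iUnion₂.mpr ⟨l, Finset.mem_erase.mpr ⟨hkl.symm, Finset.mem_univ l⟩,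
          hlt hη hk, hlt hη hl⟩⟩)
  refine (measureReal_mono hsub).trans ((measureReal_union_le _ _).trans (add_le_add
    (measureReal_biUnion_finset_le _ _) ((measureReal_biUnion_finset_le _ _).trans
      (Finset.sum_le_sum fun k _ => measureReal_biUnion_finset_le _ _))))

theorem tendsto_rpow_mul_measureReal_joint [IsFiniteMeasure μ]
    (hS : ∀ k, HasPowerTail μ (S k) α L) (hind : iIndepFun S μ) (hmeas : ∀ k, Measurable (S k))
    (hnn : ∀ k ω, 0 ≤ S k ω)
    (ha : ∀ k, 0 ≤ a k) (hb : ∀ k, 0 ≤ b k) (hα : 0 < α) :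
    Tendsto (fun x : ℝ => x ^ α * μ.real {ω | x < ∑ k, a k * S k ω ∧ x < ∑ k, b k * S k ω})
      atTop (𝓝 (∑ k, L * min (a k) (b k) ^ α)) := by
  classical
  set K : ℝ := (Fintype.card ι : ℝ)
  have hmin : ∀ k, 0 ≤ min (a k) (b k) := fun k => le_min (ha k) (hb k)
  have hmax : ∀ k, 0 ≤ max (a k) (b k) := fun k => (ha k).trans (le_max_left _ _)
  have hshrink : Tendsto (fun η : ℝ => 1 - K * η) (𝓝[>] 0) (𝓝 1) := by
    refine tendsto_nhdsWithin_of_tendsto_nhds ?_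
    exact (by fun_prop : Continuous fun η : ℝ => 1 - K * η).tendsto' 0 1 (by simp)
  have hη : ∀ᶠ η in 𝓝[>] (0 : ℝ), 0 < η ∧ 0 < 1 - K * η :=
    eventually_mem_nhdsWithin.and (hshrink.eventually (eventually_gt_nhds one_pos))
  refine tendsto_of_tendsto_of_le_of_eventually_le_family (l' := 𝓝[>] (0 : ℝ))
    (g := fun x => ∑ k, x ^ α * μ.real {ω | x < min (a k) (b k) * S k ω} -
      ∑ k, ∑ l ∈ Finset.univ.erase k, x ^ α * μ.real ({ω | x < min (a k) (b k) * S k ω} ∩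
        {ω | x < min (a l) (b l) * S l ω}))
    (u := fun η x => ∑ k, x ^ α * μ.real {ω | x < min (a k) (b k) / (1 - K * η) * S k ω} +
      ∑ k, ∑ l ∈ Finset.univ.erase k, x ^ α * μ.real ({ω | x < max (a k) (b k) / η * S k ω} ∩
        {ω | x < max (a l) (b l) / η * S l ω}))
    (U := fun η => ∑ k, L * (min (a k) (b k) / (1 - K * η)) ^ α)
    ?_ ?_ ?_ ?_ ?_
  · simpa using (tendsto_sum_rpow_mul_measureReal_lt hS hα hmin).sub
      (tendsto_sum_rpow_mul_measureReal_pair hS hind hα hmin)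
  · filter_upwards [eventually_ge_atTop 0] with x hx
    simp only [← Finset.mul_sum, ← mul_sub]
    exact mul_le_mul_of_nonneg_left
      (sum_measureReal_sub_le_measureReal_joint hnn hmeas ha hb x) (Real.rpow_nonneg hx α)
  · filter_upwards [hη] with η ⟨hη0, hKη⟩
    filter_upwards [eventually_ge_atTop 0] with x hx
    simp only [← Finset.mul_sum, ← mul_add]
    exact mul_le_mul_of_nonneg_left
      (measureReal_joint_le_sum_add hnn hx hη0 hKη) (Real.rpow_nonneg hx α)
  · filter_upwards [hη] with η ⟨hη0, hKη⟩
    simpa using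
      (tendsto_sum_rpow_mul_measureReal_lt hS hα fun k => div_nonneg (hmin k) hKη.le).add
        (tendsto_sum_rpow_mul_measureReal_pair hS hind hα fun k => div_nonneg (hmax k) hη0.le)
  · simpa using tendsto_finsetSum Finset.univ fun k _ =>
      ((tendsto_const_nhds.div hshrink one_ne_zero).rpow_const (Or.inr hα.le)).const_mul L

end JointTail

theorem chi_linear_combinations_general {Ω : Type*} [MeasurableSpace Ω] (P : Measure Ω)
    [IsProbabilityMeasure P] {K : ℕ} (S : Fin K → Ω → ℝ)
    (hmeas : ∀ k, Measurable (S k))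
    (hind : iIndepFun S P)
    (hnn : ∀ k ω, 0 ≤ S k ω)
    (C α : ℝ) (hC : 0 < C) (hα0 : 0 < α)
    (htail : ∀ k, Tendsto (fun x : ℝ => (P {ω | x < S k ω}).toReal /
      (2 * C * x ^ (-α))) atTop (nhds 1))
    (ai aj : Fin K → ℝ) (hai : ∀ k, 0 ≤ ai k) (haj : ∀ k, 0 ≤ aj k)
    (hpos : 0 < ∑ k, (min (ai k) (aj k)) ^ α)
    (hden : 0 < ∑ k, ai k ^ α) :
    Tendsto (fun x : ℝ =>
        (P {ω | x < ∑ k, ai k * S k ω ∧ x < ∑ k, aj k * S k ω}).toReal /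
          (P {ω | x < ∑ k, ai k * S k ω}).toReal) atTop
      (nhds ((∑ k, (min (ai k) (aj k)) ^ α) / (∑ k, ai k ^ α))) ∧
    0 < (∑ k, (min (ai k) (aj k)) ^ α) / (∑ k, ai k ^ α) := by
  refine ⟨?_, div_pos hpos hden⟩
  have hS : ∀ k, HasPowerTail P (S k) α (2 * C) := fun k => by
    have hlim := (htail k).const_mul (2 * C)
    rw [mul_one] at hlim
    refine hlim.congr' ?_
    filter_upwards [eventually_gt_atTop 0] with x hx
    rw [Real.rpow_neg hx.le, measureReal_def]
    field_simp
  have hjoint := tendsto_rpow_mul_measureReal_joint hS hind hmeas hnn hai haj hα0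
  have hmarg := tendsto_rpow_mul_measureReal_joint hS hind hmeas hnn hai hai hα0
  simp only [min_self, and_self, ← Finset.mul_sum] at hjoint hmarg
  have hratio := hjoint.div hmarg (by positivity)
  rw [mul_div_mul_left _ _ (by positivity)] at hratio
  refine hratio.congr' ?_
  filter_upwards [eventually_gt_atTop 0] with x hx
  rw [Pi.div_apply, mul_div_mul_left _ _ (Real.rpow_pos_of_pos hx α).ne', measureReal_def,
    measureReal_def]

/-- Tail dependence coefficient for two nonnegative linear combinations of i.i.d.
regularly varying factors: if Σ min(aki,akj)^α > 0 then
χ = lim P(Rj > x | Ri > x) = (Σ min(aki,akj)^α)/(Σ aki^α) > 0. -/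
theorem chi_linear_combinations {Ω : Type*} [MeasurableSpace Ω] (P : Measure Ω)
    [IsProbabilityMeasure P] {K : ℕ} (S : Fin K → Ω → ℝ)
    (hmeas : ∀ k, Measurable (S k))
    (hind : iIndepFun S P)
    (hident : ∀ k k' : Fin K, IdentDistrib (S k) (S k') P P)
    (hnn : ∀ k ω, 0 ≤ S k ω)
    (C α : ℝ) (hC : 0 < C) (hα0 : 0 < α) (hα1 : α < 1)
    (htail : ∀ k, Tendsto (fun x : ℝ => (P {ω | x < S k ω}).toReal /
      (2 * C * x ^ (-α))) atTop (nhds 1))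
    (ai aj : Fin K → ℝ) (hai : ∀ k, 0 ≤ ai k) (haj : ∀ k, 0 ≤ aj k)
    (hpos : 0 < ∑ k, (min (ai k) (aj k)) ^ α)
    (hden : 0 < ∑ k, ai k ^ α) :
    Tendsto (fun x : ℝ =>
        (P {ω | x < ∑ k, ai k * S k ω ∧ x < ∑ k, aj k * S k ω}).toReal /
          (P {ω | x < ∑ k, ai k * S k ω}).toReal) atTop
      (nhds ((∑ k, (min (ai k) (aj k)) ^ α) / (∑ k, ai k ^ α))) ∧
    0 < (∑ k, (min (ai k) (aj k)) ^ α) / (∑ k, ai k ^ α) :=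
  chi_linear_combinations_general P S hmeas hind hnn C α hC hα0 htail ai aj hai haj hpos hden
end

section
/- Let R and W be independent with P(R > x) ~ c_R x^{-1} and P(W > x) = x^{-1} (x ≥ 1), both regularly varying with index -1. Then P(RW > x) ~ c_R x^{-1} log x as x → ∞. -/
/-!
Conditioning on `R = r`, the Pareto law of `W` gives `P(rW > x) = min(1, r/x)`, so by the
layer-cake formula `P(RW > x) = E[min(1, R/x)] = x⁻¹ ∫₀ˣ P(R > s) ds`. Since `P(R > s) ~ c_R/s`,
this integral is `c_R log x + o(log x)`.
-/

open MeasureTheory Filter ProbabilityTheory Set Topology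

theorem ProbabilityTheory.IndepFun.measure_mem_eq_lintegral {Ω α β : Type*} [MeasurableSpace Ω]
    [MeasurableSpace α] [MeasurableSpace β] {μ : Measure Ω} [IsFiniteMeasure μ]
    {X : Ω → α} {Y : Ω → β} (hXY : IndepFun X Y μ) (hX : Measurable X) (hY : Measurable Y)
    {s : Set (α × β)} (hs : MeasurableSet s) :
    μ {ω | (X ω, Y ω) ∈ s} = ∫⁻ ω, μ {ω' | (X ω, Y ω') ∈ s} ∂μ := by
  have hsection : ∀ a, μ.map Y (Prod.mk a ⁻¹' s) = μ {ω' | (a, Y ω') ∈ s} := fun a =>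
    Measure.map_apply hY (measurable_prodMk_left hs)
  rw [← lintegral_congr fun ω => hsection (X ω),
    ← lintegral_map (measurable_measure_prodMk_left hs) hX, ← Measure.prod_apply hs,
    ← hXY.map_prod_eq_prod_map_map hX.aemeasurable hY.aemeasurable,
    Measure.map_apply (hX.prodMk hY) hs]
  rfl

theorem measure_lt_mul_of_pareto {Ω : Type*} [MeasurableSpace Ω] {μ : Measure Ω}
    [IsProbabilityMeasure μ] {W : Ω → ℝ}
    (hW : ∀ w : ℝ, 1 ≤ w → μ {ω | w < W ω} = ENNReal.ofReal w⁻¹)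
    {x r : ℝ} (hx : 0 < x) (hr : 0 ≤ r) :
    μ {ω | x < r * W ω} = ENNReal.ofReal (min 1 (r / x)) := by
  rcases hr.eq_or_lt with rfl | hr
  · simp [hx.not_gt]
  rcases le_or_gt r x with hrx | hxr
  · have hset : {ω | x < r * W ω} = {ω | x / r < W ω} := by
      ext ω; exact (div_lt_iff₀' hr).symm
    rw [hset, hW _ ((one_le_div hr).2 hrx), inv_div, min_eq_right ((div_le_one hx).2 hrx)]
  · have hsub : {ω | 1 < W ω} ⊆ {ω | x < r * W ω} := fun ω (hω : 1 < W ω) => by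
      show x < r * W ω
      nlinarith
    have hone : μ {ω | 1 < W ω} = 1 := by simpa using hW 1 le_rfl
    rw [min_eq_left ((one_le_div hx).2 hxr.le), ENNReal.ofReal_one]
    exact le_antisymm prob_le_one (hone ▸ measure_mono hsub)

theorem lintegral_ofReal_min_eq_setLIntegral_Ioo {α : Type*} [MeasurableSpace α]
    (μ : Measure α) {f : α → ℝ} (hf : 0 ≤ᵐ[μ] f) (hfm : AEMeasurable f μ) {a : ℝ} (ha : 0 ≤ a) :
    ∫⁻ ω, ENNReal.ofReal (min a (f ω)) ∂μ = ∫⁻ t in Ioo 0 a, μ {ω | t < f ω} := by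
  have hmin : ∀ t, μ {ω | t < min a (f ω)} = (Iio a).indicator (fun t => μ {ω | t < f ω}) t := by
    intro t
    by_cases hta : t < a <;> simp [hta]
  rw [lintegral_eq_lintegral_meas_lt μ (hf.mono fun ω h => le_min ha h)
      (aemeasurable_const.min hfm), lintegral_congr hmin,
    lintegral_indicator measurableSet_Iio, Measure.restrict_restrict measurableSet_Iio,
    inter_comm, Ioi_inter_Iio]

theorem antitone_measureReal_lt {α : Type*} [MeasurableSpace α] (μ : Measure α)
    [IsFiniteMeasure μ] (f : α → ℝ) : Antitone fun t => μ.real {a | t < f a} :=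
  fun _ _ hst => measureReal_mono fun _ h => hst.trans_lt h

theorem measureReal_lt_mul_of_pareto {Ω : Type*} [MeasurableSpace Ω] {P : Measure Ω}
    [IsProbabilityMeasure P] {R W : Ω → ℝ} (hR : Measurable R) (hW : Measurable W)
    (hRnn : ∀ ω, 0 ≤ R ω) (hRW : IndepFun R W P)
    (hWtail : ∀ w : ℝ, 1 ≤ w → P {ω | w < W ω} = ENNReal.ofReal w⁻¹) {x : ℝ} (hx : 0 < x) :
    P.real {ω | x < R ω * W ω} = x⁻¹ * ∫ t in 0..x, P.real {ω | t < R ω} := by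
  have hmin : ∀ r, min 1 (r / x) = x⁻¹ * min x r := fun r => by
    rw [mul_min_of_nonneg _ _ (inv_nonneg.2 hx.le), inv_mul_cancel₀ hx.ne', inv_mul_eq_div]
  have hlint : P {ω | x < R ω * W ω}
      = ENNReal.ofReal x⁻¹ * ∫⁻ t in Ioo 0 x, P {ω | t < R ω} := by
    calc P {ω | x < R ω * W ω}
        = ∫⁻ ω, P {ω' | x < R ω * W ω'} ∂P :=
          hRW.measure_mem_eq_lintegral (s := {p : ℝ × ℝ | x < p.1 * p.2}) hR hW
            (measurableSet_lt measurable_const (measurable_fst.mul measurable_snd))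
      _ = ∫⁻ ω, ENNReal.ofReal x⁻¹ * ENNReal.ofReal (min x (R ω)) ∂P := by
          refine lintegral_congr fun ω => ?_
          rw [measure_lt_mul_of_pareto hWtail hx (hRnn ω), hmin (R ω),
            ENNReal.ofReal_mul (inv_nonneg.2 hx.le)]
      _ = ENNReal.ofReal x⁻¹ * ∫⁻ t in Ioo 0 x, P {ω | t < R ω} := by
          rw [lintegral_const_mul _ (measurable_const.min hR).ennreal_ofReal,
            lintegral_ofReal_min_eq_setLIntegral_Ioo P (ae_of_all _ hRnn) hR.aemeasurable hx.le]
  have htail : ∫⁻ t in Ioo 0 x, P {ω | t < R ω}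
      = ∫⁻ t in Ioo 0 x, ENNReal.ofReal (P.real {ω | t < R ω}) :=
    lintegral_congr fun t => (ofReal_measureReal (measure_ne_top P _)).symm
  rw [measureReal_def, hlint, ENNReal.toReal_mul, ENNReal.toReal_ofReal (inv_nonneg.2 hx.le),
    intervalIntegral.integral_of_le hx.le, integral_Ioc_eq_integral_Ioo,
    integral_eq_lintegral_of_nonneg_ae (ae_of_all _ fun t => measureReal_nonneg)
      (antitone_measureReal_lt P R).measurable.aestronglyMeasurable,
    htail]

theorem abs_intervalIntegral_sub_mul_log_le {G : ℝ → ℝ} {a x c ε : ℝ} (ha : 0 < a) (hax : a ≤ x)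
    (hG : IntervalIntegrable G volume a x) (hGc : ∀ s ∈ Ioc a x, |s * G s - c| ≤ ε) :
    |(∫ s in a..x, G s) - c * Real.log (x / a)| ≤ ε * Real.log (x / a) := by
  have hx : 0 < x := ha.trans_le hax
  have hinv : IntervalIntegrable (fun s : ℝ => s⁻¹) volume a x :=
    intervalIntegrable_inv_iff.2 (Or.inr (notMem_uIcc_of_lt ha hx))
  have hpointwise : ∀ s ∈ Ioc a x, ‖G s - c * s⁻¹‖ ≤ ε * s⁻¹ := by
    intro s hs
    have hs0 : 0 < s := ha.trans hs.1
    rw [Real.norm_eq_abs, show G s - c * s⁻¹ = s⁻¹ * (s * G s - c) by field_simp, abs_mul,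
      abs_of_pos (inv_pos.2 hs0), mul_comm ε]
    exact mul_le_mul_of_nonneg_left (hGc s hs) (inv_nonneg.2 hs0.le)
  calc |(∫ s in a..x, G s) - c * Real.log (x / a)|
      = ‖∫ s in a..x, (G s - c * s⁻¹)‖ := by
        rw [intervalIntegral.integral_sub hG (hinv.const_mul c), intervalIntegral.integral_const_mul,
          integral_inv_of_pos ha hx, Real.norm_eq_abs]
    _ ≤ ∫ s in a..x, ε * s⁻¹ :=
        intervalIntegral.norm_integral_le_of_norm_le hax (ae_of_all _ hpointwise)
          (hinv.const_mul ε)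
    _ = ε * Real.log (x / a) := by
        rw [intervalIntegral.integral_const_mul, integral_inv_of_pos ha hx]

theorem isLittleO_intervalIntegral_sub_mul_log {G : ℝ → ℝ} {c : ℝ}
    (hG : ∀ x, IntervalIntegrable G volume 0 x) (hGc : Tendsto (fun s => s * G s) atTop (𝓝 c)) :
    (fun x => (∫ s in 0..x, G s) - c * Real.log x) =o[atTop] Real.log := by
  refine Asymptotics.IsLittleO.of_bound fun ε hε => ?_
  obtain ⟨M, hM1, hM⟩ : ∃ M, 1 ≤ M ∧ ∀ s, M ≤ s → |s * G s - c| ≤ ε / 2 := by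
    obtain ⟨M, hM⟩ := eventually_atTop.1
      (hGc.eventually (Metric.closedBall_mem_nhds c (half_pos hε)))
    exact ⟨max M 1, le_max_right _ _, fun s hs => hM s (le_of_max_le_left hs)⟩
  have hM0 : 0 < M := one_pos.trans_le hM1
  set K := |(∫ s in 0..M, G s) - c * Real.log M|
  have hK : ∀ᶠ x in atTop, K ≤ ε / 2 * Real.log x :=
    (Real.tendsto_log_atTop.const_mul_atTop (half_pos hε)).eventually_ge_atTop K
  filter_upwards [hK, eventually_ge_atTop M] with x hKx hMx
  have hx0 : 0 < x := hM0.trans_le hMx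
  have hsplit : (∫ s in 0..x, G s) - c * Real.log x
      = ((∫ s in 0..M, G s) - c * Real.log M)
        + ((∫ s in M..x, G s) - c * Real.log (x / M)) := by
    rw [← intervalIntegral.integral_add_adjacent_intervals (hG M) ((hG M).symm.trans (hG x)),
      Real.log_div hx0.ne' hM0.ne']
    ring
  have htail := abs_intervalIntegral_sub_mul_log_le hM0 hMx ((hG M).symm.trans (hG x))
    fun s hs => hM s hs.1.le
  have hlog : Real.log (x / M) ≤ Real.log x := by
    rw [Real.log_div hx0.ne' hM0.ne']
    linarith [Real.log_nonneg hM1]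
  rw [Real.norm_eq_abs, Real.norm_eq_abs, abs_of_nonneg (Real.log_nonneg (hM1.trans hMx)), hsplit]
  calc _ ≤ K + ε / 2 * Real.log (x / M) := (abs_add_le _ _).trans (add_le_add_right htail K)
    _ ≤ ε * Real.log x := by nlinarith

theorem tendsto_intervalIntegral_div_log_of_tendsto_mul {G : ℝ → ℝ} {c : ℝ}
    (hG : ∀ x, IntervalIntegrable G volume 0 x) (hGc : Tendsto (fun s => s * G s) atTop (𝓝 c)) :
    Tendsto (fun x => (∫ s in 0..x, G s) / Real.log x) atTop (𝓝 c) := by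
  have h := ((isLittleO_intervalIntegral_sub_mul_log hG hGc).tendsto_div_nhds_zero).add_const c
  rw [zero_add] at h
  refine h.congr' ?_
  filter_upwards [eventually_gt_atTop 1] with x hx
  have := Real.log_pos hx
  field_simp
  ring

theorem pareto_product_boundary_tail_general {Ω : Type*} [MeasurableSpace Ω]
    (P : Measure Ω) [IsProbabilityMeasure P] (R W : Ω → ℝ)
    (hRmeas : Measurable R) (hWmeas : Measurable W)
    (hRnn : ∀ ω, 0 ≤ R ω)
    (hind : IndepFun R W P)
    (cR : ℝ) (hcR : 0 < cR)
    (hRtail : Tendsto (fun x : ℝ => (P {ω | x < R ω}).toReal / (cR * x⁻¹))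
      atTop (nhds 1))
    (hWtail : ∀ w : ℝ, 1 ≤ w → P {ω | w < W ω} = ENNReal.ofReal w⁻¹) :
    Tendsto (fun x : ℝ => (P {ω | x < R ω * W ω}).toReal /
      (cR * x⁻¹ * Real.log x)) atTop (nhds 1) := by
  have hGc : Tendsto (fun s => s * P.real {ω | s < R ω}) atTop (𝓝 cR) := by
    refine (by simpa using hRtail.const_mul cR : Tendsto _ atTop (𝓝 cR)).congr' ?_
    filter_upwards [eventually_gt_atTop 0] with s hs
    rw [measureReal_def]
    field_simp
  have hlog := tendsto_intervalIntegral_div_log_of_tendsto_mul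
    (fun x => (antitone_measureReal_lt P R).intervalIntegrable) hGc
  rw [← div_self hcR.ne']
  refine (hlog.div_const cR).congr' ?_
  filter_upwards [eventually_gt_atTop 0] with x hx
  rw [← measureReal_def, measureReal_lt_mul_of_pareto hRmeas hWmeas hRnn hind hWtail hx]
  field_simp

/-- Boundary case: product of two independent Pareto(1)-type variables has tail
of order x⁻¹ log x: if P(R > x) ~ c_R x⁻¹ and P(W > x) = x⁻¹ (x ≥ 1), then
P(R W > x) ~ c_R x⁻¹ log x. -/
theorem pareto_product_boundary_tail {Ω : Type*} [MeasurableSpace Ω]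
    (P : Measure Ω) [IsProbabilityMeasure P] (R W : Ω → ℝ)
    (hRmeas : Measurable R) (hWmeas : Measurable W)
    (hRnn : ∀ ω, 0 ≤ R ω) (hW1 : ∀ ω, 1 ≤ W ω)
    (hind : IndepFun R W P)
    (cR : ℝ) (hcR : 0 < cR)
    (hRtail : Tendsto (fun x : ℝ => (P {ω | x < R ω}).toReal / (cR * x⁻¹))
      atTop (nhds 1))
    (hWtail : ∀ w : ℝ, 1 ≤ w → P {ω | w < W ω} = ENNReal.ofReal w⁻¹) :
    Tendsto (fun x : ℝ => (P {ω | x < R ω * W ω}).toReal /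
      (cR * x⁻¹ * Real.log x)) atTop (nhds 1) :=
  pareto_product_boundary_tail_general P R W hRmeas hWmeas hRnn hind cR hcR hRtail hWtail
end
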